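/- Let B, L ⊂ ℝ^ν be finite sets with #B = #L = N such that the matrix N^{-1/2}(e^{2πi b·l})_{b∈B,l∈L} is unitary. Then Σ_{l∈L} |χ_B(t−l)|² = 1 for all t ∈ ℝ^ν, where χ_B(t) = N^{-1} Σ_{b∈B} e^{2πi b·t}. -/

import Mathlib

/-!
With `e(x) = e^{2πix}` one has `χ_B(t - l) = Σ_{b∈B} (N⁻¹ e(b·t)) · e(-b·l)`, and unitarity says
exactly that the vectors `(e(-b·l))_{l∈L}`, `b ∈ B`, are orthogonal in `ℂ^L` with squared norm `N`.
Pythagoras then gives `Σ_l |χ_B(t - l)|² = N · Σ_b |N⁻¹ e(b·t)|² = N · N · N⁻² = 1`.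
-/

/-- `χ_B(t) = N^{-1} Σ_{b∈B} e^{2πi b·t}` (with `N = #B`). -/
noncomputable def chiB {ν : ℕ} (B : Finset (Fin ν → ℝ)) (t : Fin ν → ℝ) : ℂ :=
  (B.card : ℂ)⁻¹ * ∑ b ∈ B,
    Complex.exp ((((2 : ℝ) * Real.pi * ∑ i, b i * t i : ℝ) : ℂ) * Complex.I)

open Finset ComplexConjugate FourierTransform

theorem sum_norm_sq_sum_mul_of_orthogonal {β γ : Type*} [DecidableEq β]
    (B : Finset β) (L : Finset γ) (v : β → γ → ℂ) (c : β → ℂ) (N : ℝ)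
    (hv : ∀ b ∈ B, ∀ b' ∈ B, ∑ l ∈ L, v b l * conj (v b' l) = if b = b' then (N : ℂ) else 0) :
    ∑ l ∈ L, ‖∑ b ∈ B, c b * v b l‖ ^ 2 = N * ∑ b ∈ B, ‖c b‖ ^ 2 := by
  apply Complex.ofReal_injective
  push_cast
  simp_rw [← Complex.mul_conj', map_sum, map_mul, sum_mul_sum]
  calc ∑ l ∈ L, ∑ b ∈ B, ∑ b' ∈ B, c b * v b l * (conj (c b') * conj (v b' l))
      = ∑ b ∈ B, ∑ b' ∈ B, c b * conj (c b') * ∑ l ∈ L, v b l * conj (v b' l) := by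
        rw [sum_comm]
        refine sum_congr rfl fun b _ => ?_
        rw [sum_comm]
        refine sum_congr rfl fun b' _ => ?_
        rw [mul_sum]
        exact sum_congr rfl fun l _ => by ring
    _ = ∑ b ∈ B, c b * conj (c b) * N := by
        refine sum_congr rfl fun b hb => ?_
        rw [sum_congr rfl fun b' hb' => by rw [hv b hb b' hb']]
        simp [hb]
    _ = N * ∑ b ∈ B, c b * conj (c b) := by
        rw [mul_sum]
        exact sum_congr rfl fun b _ => mul_comm _ _

theorem fourierChar_mul_conj (x y : ℝ) : (𝐞 x : ℂ) * conj (𝐞 y : ℂ) = 𝐞 (x - y) := by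
  rw [← Circle.coe_inv_eq_conj, ← Circle.coe_mul, ← AddChar.map_neg_eq_inv,
    ← AddChar.map_add_eq_mul, sub_eq_add_neg]

theorem sum_chiB_sq_eq_one_general {ν N : ℕ} (hN : 0 < N)
    (B L : Finset (Fin ν → ℝ))
    (hB : B.card = N)
    (hH : ∀ b ∈ B, ∀ b' ∈ B,
      ∑ l ∈ L,
          Complex.exp ((((2 : ℝ) * Real.pi * ∑ i, l i * (b' i - b i) : ℝ) : ℂ) * Complex.I)
        = if b = b' then (N : ℂ) else 0) :
    ∀ t : Fin ν → ℝ, ∑ l ∈ L, ‖chiB B (t - l)‖ ^ 2 = 1 := by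
  intro t
  -- The exponentials in `hH` and in `chiB` are definitionally `𝐞` of dot products.
  have hv : ∀ b ∈ B, ∀ b' ∈ B, ∑ l ∈ L, (𝐞 (-(b ⬝ᵥ l)) : ℂ) * conj (𝐞 (-(b' ⬝ᵥ l)) : ℂ)
      = if b = b' then ((N : ℝ) : ℂ) else 0 := by
    intro b hb b' hb'
    rw [Complex.ofReal_natCast, ← hH b hb b' hb']
    refine sum_congr rfl fun l _ => ?_
    rw [fourierChar_mul_conj]
    show _ = ((𝐞 (l ⬝ᵥ (b' - b)) : Circle) : ℂ)
    rw [dotProduct_sub, dotProduct_comm l, dotProduct_comm l]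
    ring_nf
  have hchi : ∀ l, chiB B (t - l) = ∑ b ∈ B, ((N : ℂ)⁻¹ * 𝐞 (b ⬝ᵥ t)) * 𝐞 (-(b ⬝ᵥ l)) := by
    intro l
    show (B.card : ℂ)⁻¹ * ∑ b ∈ B, ((𝐞 (b ⬝ᵥ (t - l)) : Circle) : ℂ) = _
    simp_rw [hB, mul_sum, mul_assoc, ← Circle.coe_mul, ← AddChar.map_add_eq_mul, dotProduct_sub,
      sub_eq_add_neg]
  calc ∑ l ∈ L, ‖chiB B (t - l)‖ ^ 2
      = N * ∑ b ∈ B, ‖(N : ℂ)⁻¹ * 𝐞 (b ⬝ᵥ t)‖ ^ 2 := by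
        simp_rw [hchi]
        exact sum_norm_sq_sum_mul_of_orthogonal B L _ _ N hv
    _ = 1 := by
        simp only [Complex.norm_mul, norm_inv, RCLike.norm_natCast, Circle.norm_coe, mul_one,
          inv_pow, sum_const, hB, nsmul_eq_mul]
        field_simp

/-- If `N^{-1/2}(e^{2πi b·l})_{b∈B,l∈L}` is unitary, then `Σ_{l∈L} |χ_B(t−l)|² = 1`. -/
theorem sum_chiB_sq_eq_one {ν N : ℕ} (hN : 0 < N)
    (B L : Finset (Fin ν → ℝ))
    (hB : B.card = N) (hL : L.card = N)
    (hH : ∀ b ∈ B, ∀ b' ∈ B,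
      ∑ l ∈ L,
          Complex.exp ((((2 : ℝ) * Real.pi * ∑ i, l i * (b' i - b i) : ℝ) : ℂ) * Complex.I)
        = if b = b' then (N : ℂ) else 0) :
    ∀ t : Fin ν → ℝ, ∑ l ∈ L, ‖chiB B (t - l)‖ ^ 2 = 1 :=
  sum_chiB_sq_eq_one_general hN B L hB hH
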